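/- arXiv:2206.10240 — 2 statements merged into one kernel-verified Lean document; each statement's English description precedes it below -/
import Mathlib

section
/- Let X ∈ ℝ^{n×p} have XᵀX invertible, y ∈ ℝⁿ with y ≠ X β̂_OLS, and let ε > 0. Suppose the sketch X* ∈ ℝ^{n×p} has X*ᵀX invertible and satisfies ‖X − X*‖₂ ≤ ε′‖X‖₂, where ε′ obeys 0 < ε′ ≤ (1/κ²(X)) · (1 + (κ²(X)+1)‖y‖ / (ε^{1/2} ‖y − X β̂_OLS‖))^{-1}. Then the core-elements estimator β̃ = (X*ᵀX)⁻¹X*ᵀy satisfies ‖y − X β̂_OLS‖² ≤ ‖y − X β̃‖² ≤ (1+ε)‖y − X β̂_OLS‖². -/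
/-!
Let `r = y - Xβ̂_OLS`, so that `Xᵀr = 0`. Since the residual of `β̃` is orthogonal to `X*`,
`XᵀX (β̂_OLS - β̃) = (X - X*)ᵀ (y - Xβ̃)`, hence `δ := ‖X(β̂_OLS - β̃)‖ ≤ t ‖y - Xβ̃‖`
with `t = ε′κ²(X)`. By Pythagoras `‖y - Xβ̃‖² = ‖r‖² + δ²`, so `δ ≤ t (‖r‖ + δ)`, and the
bound on `ε′` gives `t ≤ √ε / (1 + √ε)`, whence `δ ≤ √ε ‖r‖` and
`‖y - Xβ̃‖² ≤ (1 + ε)‖r‖²`.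
-/

open Matrix
open scoped Matrix.Norms.L2Operator

noncomputable def vnorm {n : ℕ} (v : Fin n → ℝ) : ℝ := Real.sqrt (∑ i, v i ^ 2)

lemma vnorm_eq_norm_toLp {n : ℕ} (v : Fin n → ℝ) : vnorm v = ‖WithLp.toLp 2 v‖ := by
  simp [vnorm, EuclideanSpace.norm_eq, sq_abs]

lemma vnorm_nonneg {n : ℕ} (v : Fin n → ℝ) : 0 ≤ vnorm v := Real.sqrt_nonneg _

lemma vnorm_pos {n : ℕ} {v : Fin n → ℝ} (hv : v ≠ 0) : 0 < vnorm v := by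
  simpa [vnorm_eq_norm_toLp] using hv

lemma vnorm_sq_eq_dotProduct {n : ℕ} (v : Fin n → ℝ) : vnorm v ^ 2 = v ⬝ᵥ v := by
  rw [vnorm, Real.sq_sqrt (by positivity)]
  simp [dotProduct, sq]

lemma vnorm_mulVec_le {m n : ℕ} (A : Matrix (Fin m) (Fin n) ℝ) (v : Fin n → ℝ) :
    vnorm (A *ᵥ v) ≤ ‖A‖ * vnorm v := by
  simpa [vnorm_eq_norm_toLp] using A.l2_opNorm_mulVec (WithLp.toLp 2 v)

lemma vnorm_add_mulVec_sq {n p : ℕ} {X : Matrix (Fin n) (Fin p) ℝ} {r : Fin n → ℝ}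
    (hr : Xᵀ *ᵥ r = 0) (u : Fin p → ℝ) :
    vnorm (r + X *ᵥ u) ^ 2 = vnorm r ^ 2 + vnorm (X *ᵥ u) ^ 2 := by
  have horth : r ⬝ᵥ X *ᵥ u = 0 := by
    rw [dotProduct_mulVec, ← mulVec_transpose, hr, zero_dotProduct]
  simp only [vnorm_sq_eq_dotProduct, add_dotProduct, dotProduct_add,
    dotProduct_comm (X *ᵥ u) r, horth]
  ring

section CoreEstimator

variable {m n R : Type*} [Fintype m] [Fintype n] [DecidableEq n] [CommRing R]

/-- `β̂_OLS = coreEstimator X X y` and `β̃ = coreEstimator X* X y`. -/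
noncomputable def coreEstimator (S X : Matrix m n R) (y : m → R) : n → R :=
  (Sᵀ * X)⁻¹ *ᵥ (Sᵀ *ᵥ y)

lemma transpose_mulVec_sub_mulVec_coreEstimator {S X : Matrix m n R}
    (h : IsUnit (Sᵀ * X).det) (y : m → R) : Sᵀ *ᵥ (y - X *ᵥ coreEstimator S X y) = 0 := by
  rw [coreEstimator, mulVec_sub, mulVec_mulVec, mulVec_mulVec, mul_nonsing_inv _ h, one_mulVec,
    sub_self]

lemma coreEstimator_self_sub_coreEstimator {S X : Matrix m n R} (hX : IsUnit (Xᵀ * X).det)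
    (hS : IsUnit (Sᵀ * X).det) (y : m → R) :
    coreEstimator X X y - coreEstimator S X y =
      (Xᵀ * X)⁻¹ *ᵥ ((X - S)ᵀ *ᵥ (y - X *ᵥ coreEstimator S X y)) := by
  rw [transpose_sub, sub_mulVec, transpose_mulVec_sub_mulVec_coreEstimator hS, sub_zero,
    mulVec_sub, mulVec_mulVec, mulVec_sub, mulVec_mulVec (coreEstimator S X y) (Xᵀ * X)⁻¹,
    nonsing_inv_mul _ hX, one_mulVec, coreEstimator]

end CoreEstimator

lemma vnorm_mulVec_coreEstimator_sub_le {n p : ℕ} {S X : Matrix (Fin n) (Fin p) ℝ}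
    (hX : IsUnit (Xᵀ * X).det) (hS : IsUnit (Sᵀ * X).det) (y : Fin n → ℝ) :
    vnorm (X *ᵥ (coreEstimator X X y - coreEstimator S X y)) ≤
      ‖X‖ * ‖(Xᵀ * X)⁻¹‖ * ‖X - S‖ * vnorm (y - X *ᵥ coreEstimator S X y) := by
  have hT : ‖(X - S)ᵀ‖ = ‖X - S‖ := by
    rw [← conjTranspose_eq_transpose_of_trivial, l2_opNorm_conjTranspose]
  rw [coreEstimator_self_sub_coreEstimator hX hS, ← hT]
  set e := y - X *ᵥ coreEstimator S X y
  calc _ ≤ ‖X‖ * vnorm ((Xᵀ * X)⁻¹ *ᵥ ((X - S)ᵀ *ᵥ e)) := vnorm_mulVec_le _ _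
    _ ≤ ‖X‖ * (‖(Xᵀ * X)⁻¹‖ * (‖(X - S)ᵀ‖ * vnorm e)) := by
        gcongr
        exact (vnorm_mulVec_le _ _).trans (by gcongr; exact vnorm_mulVec_le _ _)
    _ = _ := by ring

lemma le_mul_of_le_mul_of_le_add {r s δ t e : ℝ} (hr : 0 ≤ r) (hs : 0 ≤ s) (he : 0 ≤ e)
    (hδ : δ ≤ t * s) (hsδ : s ≤ r + δ) (ht : t * (1 + e) ≤ e) : δ ≤ e * r := by
  rcases le_or_gt t 0 with ht0 | ht0
  · nlinarith
  · have h1t : 0 < 1 - t := by nlinarith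
    have : δ * (1 - t) ≤ e * r * (1 - t) := by nlinarith
    exact le_of_mul_le_mul_right this h1t

lemma mul_mul_one_add_le_of_le_inv {ε' κ e r b : ℝ} (hκ : 0 ≤ κ) (he : 0 < e) (hr : 0 < r)
    (hrb : r ≤ b) (hε' : ε' ≤ 1 / κ * (1 + (κ + 1) * b / (e * r))⁻¹) : ε' * κ * (1 + e) ≤ e := by
  rcases hκ.eq_or_lt with rfl | hκ
  · simpa using he.le
  have hb : 1 / e ≤ (κ + 1) * b / (e * r) := by
    rw [div_le_div_iff₀ he (by positivity)]
    nlinarith [mul_le_mul_of_nonneg_left hrb he.le,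
      mul_nonneg hκ.le (mul_nonneg (hr.le.trans hrb) he.le)]
  have : ε' * κ ≤ e / (1 + e) :=
    calc ε' * κ ≤ (1 + (κ + 1) * b / (e * r))⁻¹ := by
          rwa [← le_div_iff₀ hκ, div_eq_mul_one_div, mul_comm]
      _ ≤ (1 + 1 / e)⁻¹ := inv_anti₀ (by positivity) (by linarith)
      _ = e / (1 + e) := by field_simp; ring
  rwa [le_div_iff₀ (by positivity)] at this

theorem core_elements_coreset_general
    (n p : ℕ)
    (X Xs : Matrix (Fin n) (Fin p) ℝ) (y : Fin n → ℝ) (ε ε' : ℝ)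
    (hX : IsUnit (Xᵀ * X).det) (hXs : IsUnit (Xsᵀ * X).det)
    (βOLS : Fin p → ℝ) (hβOLS : βOLS = (Xᵀ * X)⁻¹ *ᵥ (Xᵀ *ᵥ y))
    (βt : Fin p → ℝ) (hβt : βt = (Xsᵀ * X)⁻¹ *ᵥ (Xsᵀ *ᵥ y))
    (hy : y ≠ X *ᵥ βOLS) (hε : 0 < ε)
    (κ2 : ℝ) (hκ2 : κ2 = ‖X‖ ^ 2 * ‖(Xᵀ * X)⁻¹‖)
    (hL : ‖X - Xs‖ ≤ ε' * ‖X‖)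
    (hε'le : ε' ≤ (1 / κ2) *
      (1 + (κ2 + 1) * vnorm y / (Real.sqrt ε * vnorm (y - X *ᵥ βOLS)))⁻¹) :
    vnorm (y - X *ᵥ βOLS) ^ 2 ≤ vnorm (y - X *ᵥ βt) ^ 2 ∧
      vnorm (y - X *ᵥ βt) ^ 2 ≤ (1 + ε) * vnorm (y - X *ᵥ βOLS) ^ 2 := by
  obtain rfl : βOLS = coreEstimator X X y := hβOLS
  obtain rfl : βt = coreEstimator Xs X y := hβt
  set β := coreEstimator X X y
  set β' := coreEstimator Xs X y
  have horth : Xᵀ *ᵥ (y - X *ᵥ β) = 0 := transpose_mulVec_sub_mulVec_coreEstimator hX y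
  have hpyth := vnorm_add_mulVec_sq horth (β - β')
  have hy_sq := vnorm_add_mulVec_sq horth β
  rw [mulVec_sub, sub_add_sub_cancel, ← mulVec_sub] at hpyth
  rw [sub_add_cancel] at hy_sq
  set r := vnorm (y - X *ᵥ β)
  set s := vnorm (y - X *ᵥ β')
  set δ := vnorm (X *ᵥ (β - β'))
  have hr : 0 < r := vnorm_pos (sub_ne_zero.mpr hy)
  have hs : 0 ≤ s := vnorm_nonneg _
  have hδ0 : 0 ≤ δ := vnorm_nonneg _
  have hry : r ≤ vnorm y := by nlinarith [vnorm_nonneg (X *ᵥ β), vnorm_nonneg y]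
  have hsrδ : s ≤ r + δ := by nlinarith
  have hδ : δ ≤ ε' * κ2 * s :=
    calc δ ≤ ‖X‖ * ‖(Xᵀ * X)⁻¹‖ * ‖X - Xs‖ * s := vnorm_mulVec_coreEstimator_sub_le hX hXs y
      _ ≤ ‖X‖ * ‖(Xᵀ * X)⁻¹‖ * (ε' * ‖X‖) * s := by gcongr
      _ = ε' * κ2 * s := by rw [hκ2]; ring
  have ht := mul_mul_one_add_le_of_le_inv (by rw [hκ2]; positivity) (Real.sqrt_pos.mpr hε) hr
    hry hε'le
  have hδr : δ ≤ √ε * r := le_mul_of_le_mul_of_le_add hr.le hs (Real.sqrt_nonneg ε) hδ hsrδ ht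
  have hδ_sq : δ ^ 2 ≤ ε * r ^ 2 :=
    calc δ ^ 2 ≤ (√ε * r) ^ 2 := pow_le_pow_left₀ hδ0 hδr 2
      _ = ε * r ^ 2 := by rw [mul_pow, Real.sq_sqrt hε.le]
  exact ⟨by nlinarith, by linarith⟩

/-- **Core-elements coreset theorem.**  If the sketch `X*` satisfies
`‖X − X*‖₂ ≤ ε′‖X‖₂` with `ε′` small enough (in terms of the squared condition
number `κ²(X) = ‖X‖₂²‖(XᵀX)⁻¹‖₂`), then the core-elements estimator
`β̃ = (X*ᵀX)⁻¹X*ᵀy` achieves the `(1+ε)`-relative error. -/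
theorem core_elements_coreset
    (n p : ℕ) (hp : 1 ≤ p) (hpn : p ≤ n)
    (X Xs : Matrix (Fin n) (Fin p) ℝ) (y : Fin n → ℝ) (ε ε' : ℝ)
    (hX : IsUnit (Xᵀ * X).det) (hXs : IsUnit (Xsᵀ * X).det)
    (βOLS : Fin p → ℝ) (hβOLS : βOLS = (Xᵀ * X)⁻¹ *ᵥ (Xᵀ *ᵥ y))
    (βt : Fin p → ℝ) (hβt : βt = (Xsᵀ * X)⁻¹ *ᵥ (Xsᵀ *ᵥ y))
    (hy : y ≠ X *ᵥ βOLS) (hε : 0 < ε)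
    (κ2 : ℝ) (hκ2 : κ2 = ‖X‖ ^ 2 * ‖(Xᵀ * X)⁻¹‖)
    (hL : ‖X - Xs‖ ≤ ε' * ‖X‖)
    (hε'pos : 0 < ε')
    (hε'le : ε' ≤ (1 / κ2) *
      (1 + (κ2 + 1) * vnorm y / (Real.sqrt ε * vnorm (y - X *ᵥ βOLS)))⁻¹) :
    vnorm (y - X *ᵥ βOLS) ^ 2 ≤ vnorm (y - X *ᵥ βt) ^ 2 ∧
      vnorm (y - X *ᵥ βt) ^ 2 ≤ (1 + ε) * vnorm (y - X *ᵥ βOLS) ^ 2 :=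
  core_elements_coreset_general n p X Xs y ε ε' hX hXs βOLS hβOLS βt hβt hy hε κ2 hκ2 hL hε'le
end

section
/- Let X ∈ ℝ^{n×p} have XᵀX invertible, let X* ∈ ℝ^{n×p} with X*ᵀX invertible, set L = X − X*, and suppose ‖L‖₂ ≤ ε′‖X‖₂ for some ε′ > 0 and that λ₀ := ‖(XᵀX)⁻¹LᵀX‖₂ < 1. Then the difference of hat matrices satisfies ‖X(XᵀX)⁻¹Xᵀ − X(X*ᵀX)⁻¹X*ᵀ‖₂ ≤ ((λ₀ + ε′)/(1 − λ₀)) · ‖X‖₂² · ‖(XᵀX)⁻¹‖₂. -/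
/-!
Write `A = XᵀX`, `B = X*ᵀX` and `H = X A⁻¹ Xᵀ`. Since `Xᵀ(1 - H) = 0`, the difference of hat
matrices factors as `H - X B⁻¹ X*ᵀ = X B⁻¹ Lᵀ (1 - H)`, and `1 - H` is an orthogonal projection,
so it has norm at most `1`. The resolvent identity `B⁻¹ = A⁻¹ + A⁻¹ Lᵀ X B⁻¹` gives
`‖B⁻¹‖ ≤ ‖A⁻¹‖ / (1 - λ₀)`, whence `‖H - X B⁻¹ X*ᵀ‖ ≤ ε′ κ²(X) / (1 - λ₀)`, and
`ε′ ≤ λ₀ + ε′`.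
-/

open Matrix
open scoped Matrix.Norms.L2Operator

theorem norm_le_div_one_sub_of_eq_add_mul {R : Type*} [NonUnitalSeminormedRing R] {v a m : R}
    (h : v = a + m * v) (hm : ‖m‖ < 1) : ‖v‖ ≤ ‖a‖ / (1 - ‖m‖) := by
  rw [le_div_iff₀ (by linarith), mul_one_sub, sub_le_iff_le_add]
  calc ‖v‖ = ‖a + m * v‖ := congrArg _ h
    _ ≤ ‖a‖ + ‖m‖ * ‖v‖ := (norm_add_le _ _).trans (add_le_add_right (norm_mul_le _ _) _)
    _ = ‖a‖ + ‖v‖ * ‖m‖ := by rw [mul_comm]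

namespace Matrix

variable {m n : Type*} [Fintype m] [Fintype n] [DecidableEq n]

theorem inv_eq_inv_add_inv_mul_sub_mul_inv {R : Type*} [CommRing R] {A B : Matrix n n R}
    (hA : IsUnit A.det) (hB : IsUnit B.det) : B⁻¹ = A⁻¹ + A⁻¹ * (A - B) * B⁻¹ := by
  have h := inv_sub_inv (A := A) (B := B)
    (by rw [isUnit_iff_isUnit_det, isUnit_iff_isUnit_det (A := B)]; exact iff_of_true hA hB)
  rw [← neg_sub B A, Matrix.mul_neg, Matrix.neg_mul, ← h]
  abel

theorem transpose_mul_hat {R : Type*} [CommRing R] {X : Matrix m n R}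
    (hX : IsUnit (Xᵀ * X).det) : Xᵀ * (X * (Xᵀ * X)⁻¹ * Xᵀ) = Xᵀ := by
  rw [← Matrix.mul_assoc, ← Matrix.mul_assoc, mul_nonsing_inv _ hX, Matrix.one_mul]

theorem isStarProjection_hat {X : Matrix m n ℝ} (hX : IsUnit (Xᵀ * X).det) :
    IsStarProjection (X * (Xᵀ * X)⁻¹ * Xᵀ) where
  isIdempotentElem := by
    rw [IsIdempotentElem, Matrix.mul_assoc _ _ Xᵀ, ← Matrix.mul_assoc _ _ Xᵀ,
      Matrix.mul_assoc (X * _), transpose_mul_hat hX]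
  isSelfAdjoint := by
    rw [IsSelfAdjoint, star_eq_conjTranspose, conjTranspose_eq_transpose_of_trivial]
    simp [transpose_nonsing_inv, Matrix.mul_assoc]

theorem l2_opNorm_mul_le_of_isStarProjection {A : Matrix m n ℝ} {P : Matrix n n ℝ}
    (hP : IsStarProjection P) : ‖A * P‖ ≤ ‖A‖ :=
  (l2_opNorm_mul A P).trans (mul_le_of_le_one_right (norm_nonneg A) (hP.norm_le P))

variable [DecidableEq m]

theorem hat_sub_hat_eq {R : Type*} [CommRing R] {X Y : Matrix m n R}
    (hX : IsUnit (Xᵀ * X).det) (hY : IsUnit (Yᵀ * X).det) :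
    X * (Xᵀ * X)⁻¹ * Xᵀ - X * (Yᵀ * X)⁻¹ * Yᵀ =
      X * (Yᵀ * X)⁻¹ * (X - Y)ᵀ * (1 - X * (Xᵀ * X)⁻¹ * Xᵀ) := by
  set H := X * (Xᵀ * X)⁻¹ * Xᵀ
  have hYH : Yᵀ * H = Yᵀ * X * ((Xᵀ * X)⁻¹ * Xᵀ) := by simp only [H, Matrix.mul_assoc]
  calc H - X * (Yᵀ * X)⁻¹ * Yᵀ
      = X * ((Yᵀ * X)⁻¹ * (Yᵀ * X) * ((Xᵀ * X)⁻¹ * Xᵀ)) - X * (Yᵀ * X)⁻¹ * Yᵀ := by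
        rw [nonsing_inv_mul _ hY, Matrix.one_mul, ← Matrix.mul_assoc]
    _ = X * (Yᵀ * X)⁻¹ * ((X - Y)ᵀ * (1 - H)) := by
        rw [transpose_sub, Matrix.sub_mul, Matrix.mul_sub Xᵀ, Matrix.mul_sub Yᵀ, Matrix.mul_one,
          Matrix.mul_one, transpose_mul_hat hX, hYH]
        simp only [Matrix.mul_sub, Matrix.mul_assoc]
        abel
    _ = X * (Yᵀ * X)⁻¹ * (X - Y)ᵀ * (1 - H) := (Matrix.mul_assoc _ _ _).symm

theorem l2_opNorm_transpose (A : Matrix m n ℝ) : ‖Aᵀ‖ = ‖A‖ := by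
  rw [← conjTranspose_eq_transpose_of_trivial, l2_opNorm_conjTranspose]

end Matrix

theorem hat_matrix_difference_bound_general
    (n p : ℕ)
    (X Xs : Matrix (Fin n) (Fin p) ℝ)
    (hX : IsUnit (Xᵀ * X).det) (hXs : IsUnit (Xsᵀ * X).det)
    (L : Matrix (Fin n) (Fin p) ℝ) (hLdef : L = X - Xs)
    (ε' : ℝ) (hL : ‖L‖ ≤ ε' * ‖X‖)
    (lam0 : ℝ) (hlam0 : lam0 = ‖(Xᵀ * X)⁻¹ * Lᵀ * X‖) (hlt : lam0 < 1) :
    ‖X * (Xᵀ * X)⁻¹ * Xᵀ - X * (Xsᵀ * X)⁻¹ * Xsᵀ‖ ≤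
      ((lam0 + ε') / (1 - lam0)) * ‖X‖ ^ 2 * ‖(Xᵀ * X)⁻¹‖ := by
  have hresolvent : (Xsᵀ * X)⁻¹ = (Xᵀ * X)⁻¹ + (Xᵀ * X)⁻¹ * Lᵀ * X * (Xsᵀ * X)⁻¹ := by
    have h := inv_eq_inv_add_inv_mul_sub_mul_inv hX hXs
    rwa [← Matrix.sub_mul, ← transpose_sub, ← hLdef, ← Matrix.mul_assoc] at h
  have hinv : ‖(Xsᵀ * X)⁻¹‖ ≤ ‖(Xᵀ * X)⁻¹‖ / (1 - lam0) := by
    subst hlam0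
    exact norm_le_div_one_sub_of_eq_add_mul hresolvent hlt
  have hlam0_nonneg : 0 ≤ lam0 := hlam0 ▸ norm_nonneg _
  rw [hat_sub_hat_eq hX hXs, ← hLdef]
  calc _ ≤ ‖X * (Xsᵀ * X)⁻¹ * Lᵀ‖ :=
        l2_opNorm_mul_le_of_isStarProjection (isStarProjection_hat hX).one_sub
    _ ≤ ‖X‖ * ‖(Xsᵀ * X)⁻¹‖ * ‖L‖ := by
        rw [← l2_opNorm_transpose L]
        exact (l2_opNorm_mul _ _).trans (by gcongr; exact l2_opNorm_mul _ _)
    _ ≤ ‖X‖ * (‖(Xᵀ * X)⁻¹‖ / (1 - lam0)) * (ε' * ‖X‖) := by gcongr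
    _ = ε' / (1 - lam0) * ‖X‖ ^ 2 * ‖(Xᵀ * X)⁻¹‖ := by ring
    _ ≤ _ := by gcongr; linarith

/-- **Bound on the difference of hat matrices.** If `L = X − X*` satisfies
`‖L‖₂ ≤ ε′‖X‖₂` and `λ₀ = ‖(XᵀX)⁻¹LᵀX‖₂ < 1`, then
`‖X(XᵀX)⁻¹Xᵀ − X(X*ᵀX)⁻¹X*ᵀ‖₂ ≤ ((λ₀+ε′)/(1−λ₀))·‖X‖₂²·‖(XᵀX)⁻¹‖₂`. -/
theorem hat_matrix_difference_bound
    (n p : ℕ) (hp : 1 ≤ p) (hpn : p ≤ n)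
    (X Xs : Matrix (Fin n) (Fin p) ℝ)
    (hX : IsUnit (Xᵀ * X).det) (hXs : IsUnit (Xsᵀ * X).det)
    (L : Matrix (Fin n) (Fin p) ℝ) (hLdef : L = X - Xs)
    (ε' : ℝ) (hε' : 0 < ε') (hL : ‖L‖ ≤ ε' * ‖X‖)
    (lam0 : ℝ) (hlam0 : lam0 = ‖(Xᵀ * X)⁻¹ * Lᵀ * X‖) (hlt : lam0 < 1) :
    ‖X * (Xᵀ * X)⁻¹ * Xᵀ - X * (Xsᵀ * X)⁻¹ * Xsᵀ‖ ≤
      ((lam0 + ε') / (1 - lam0)) * ‖X‖ ^ 2 * ‖(Xᵀ * X)⁻¹‖ :=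
  hat_matrix_difference_bound_general n p X Xs hX hXs L hLdef ε' hL lam0 hlam0 hlt
end
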